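/- In the coevolutionary action–opinion public goods game with n players and multiplier 0 < r < n, suppose that every player i has parameters satisfying β_iλ_i/(β_i + λ_i) > γ_i·(1 − r/n). Then the all-cooperation profile in which every player has action x_i = +1 and opinion y_i = +1 is a Nash equilibrium: for every player i and every deviation (x, y) ∈ {−1,+1} × [−1,1], the payoff of player i at (+1, +1) is at least the payoff at (x, y), given that all other players hold (x_j, y_j) = (+1, +1). -/
import Mathlib


open Finset

/-- Payoff of player `i` in the coevolutionary action–opinion public goods game with
multiplier `r` and parameters `γ_i, β_i, λ_i`, for choosing the pair
`(a,b) ∈ {-1,+1} × [-1,1]` against the actions `x` and opinions `y` of the others. -/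
noncomputable def coevPGGPayoff (n : ℕ) (W : Fin n → Fin n → ℝ) (r : ℝ)
    (γ β lam : ℝ) (i : Fin n) (x y : Fin n → ℝ) (a b : ℝ) : ℝ :=
  γ * (r * (((n : ℝ) - 1 + ∑ j ∈ univ.erase i, x j) / (2 * n)) +
        (r / n - 1) * (a + 1) / 2)
    - β / 2 * ∑ j, W i j * (b - y j) ^ 2
    - lam / 2 * (a - b) ^ 2

/-- In the coevolutionary action–opinion public goods game with
`0 < r < n`, if every player `i` satisfies `β_i λ_i/(β_i+λ_i) > γ_i (1 - r/n)`,
then the all-cooperation profile with `(x_j, y_j) = (+1, +1)` for every `j` is a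
Nash equilibrium: no player can improve their payoff with any unilateral deviation
`(a,b) ∈ {-1,+1} × [-1,1]`. -/
theorem coev_pgg_all_cooperation_nash
    (n : ℕ) (hn : 2 ≤ n) (W : Fin n → Fin n → ℝ)
    (hW : ∀ i j, 0 ≤ W i j) (hWdiag : ∀ i, W i i = 0) (hWrow : ∀ i, ∑ j, W i j = 1)
    (r : ℝ) (hr0 : 0 < r) (hrn : r < n)
    (γ β lam : Fin n → ℝ)
    (hγ : ∀ i, 0 ≤ γ i) (hβ : ∀ i, 0 < β i) (hlam : ∀ i, 0 < lam i)
    (hcond : ∀ i, β i * lam i / (β i + lam i) > γ i * (1 - r / n)) :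
    ∀ i : Fin n, ∀ a b : ℝ, (a = -1 ∨ a = 1) → b ∈ Set.Icc (-1 : ℝ) 1 →
      coevPGGPayoff n W r (γ i) (β i) (lam i) i (fun _ => 1) (fun _ => 1) a b ≤
        coevPGGPayoff n W r (γ i) (β i) (lam i) i (fun _ => 1) (fun _ => 1) 1 1 := by
  intro i a b ha hb
  have hn' : (0:ℝ) < n := by positivity
  have hsum : ∀ c : ℝ, ∑ j, W i j * c = c := by
    intro c; rw [← Finset.sum_mul, hWrow i, one_mul]
  have hβi := hβ i
  have hli := hlam i
  have hγi := hγ i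
  have hc : β i * lam i > γ i * (1 - r / n) * (β i + lam i) := by
    have := hcond i
    rw [gt_iff_lt, lt_div_iff₀ (by linarith)] at this
    linarith
  have hrn' : 0 ≤ 1 - r / n := by
    rw [sub_nonneg, div_le_one hn']; linarith
  simp only [coevPGGPayoff, hsum]
  rcases ha with rfl | rfl
  · nlinarith [sq_nonneg (b - 1), sq_nonneg (b + 1), sq_nonneg (β i * (b-1) + lam i * (b+1)),
      mul_nonneg hγi hrn', mul_pos hβi hli]
  · nlinarith [sq_nonneg (b - 1), mul_pos hβi hli]
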